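/- Suppose the probability space Ω is finite. Then for every tax rate α ∈ [0,1) and every initial capital x ∈ ℝ, the set {V^α(x,N) : N ∈ 𝒩} − L^0(ℱ_T; ℝ_+) of attainable after-tax terminal wealths is closed with respect to the supremum norm — even if the no-arbitrage condition fails. -/

import Mathlib

open MeasureTheory Filter Finset

noncomputable section
open scoped Classical

/-- Euclidean inner product on `Fin d → ℝ`. -/
def dotp {d : ℕ} (a b : Fin d → ℝ) : ℝ := ∑ j, a j * b j

/-- Euclidean norm on `Fin d → ℝ`. -/
def eucNorm {d : ℕ} (a : Fin d → ℝ) : ℝ := Real.sqrt (∑ j, a j ^ 2)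

/-- Accumulated realized gains and losses `G_t`, given the bank account history `eta`:
`G_t = ∑_{u=1}^t ( η_{u-1} r_u + ∑_{i=0}^{u-1} ⟨N_{i,u-1} - N_{i,u}, S_u - S_i⟩ )`. -/
def Gaux {d : ℕ} (S : ℕ → Fin d → ℝ) (r : ℕ → ℝ) (N : ℕ → ℕ → Fin d → ℝ)
    (eta : ℕ → ℝ) (t : ℕ) : ℝ :=
  ∑ u ∈ Finset.Icc 1 t,
    (eta (u - 1) * r u +
      ∑ i ∈ Finset.range u, dotp (fun j => N i (u - 1) j - N i u j) (fun j => S u j - S i j))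

/-- Limited-use-of-losses tax payments `Π_t = α · max_{0 ≤ u ≤ t} G_u`. -/
def Piaux {d : ℕ} (α : ℝ) (S : ℕ → Fin d → ℝ) (r : ℕ → ℝ) (N : ℕ → ℕ → Fin d → ℝ)
    (eta : ℕ → ℝ) (t : ℕ) : ℝ :=
  α * (Finset.range (t + 1)).sup' ⟨t, Finset.mem_range.mpr (Nat.lt_succ_self t)⟩ (fun u => Gaux S r N eta u)

/-- `etaHist α x S r N t` is the bank-account history after trading and taxes, up to time `t`:
for `s ≤ t` it gives `η_s`, and for `s > t` it gives `η_t`.  It is defined by the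
self-financing recursion `η_{-1} = x`,
`η_t - η_{t-1} = r_t η_{t-1} 1_{t ≥ 1} + ⟨∑_{i<t}(N_{i,t-1} - N_{i,t}) - N_{t,t}, S_t⟩
  - (Π_t - Π_{t-1}) 1_{t ≥ 1}`. -/
def etaHist {d : ℕ} (α x : ℝ) (S : ℕ → Fin d → ℝ) (r : ℕ → ℝ)
    (N : ℕ → ℕ → Fin d → ℝ) : ℕ → ℕ → ℝ :=
  Nat.rec (motive := fun _ => ℕ → ℝ)
    (fun _ => x - dotp (fun j => N 0 0 j) (fun j => S 0 j))
    (fun t e => fun s =>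
      if s ≤ t then e s
      else
        e t + r (t + 1) * e t
          + dotp
              (fun j => (∑ i ∈ Finset.range (t + 1), (N i t j - N i (t + 1) j))
                - N (t + 1) (t + 1) j)
              (fun j => S (t + 1) j)
          - (Piaux α S r N e (t + 1) - Piaux α S r N e t))

/-- A discrete-time market with horizon `T`, `d` risky assets, a filtration `F`,
adapted nonnegative-price processes are not required in general, and a nonnegative adapted
interest-rate process `r`. -/
structure Market (Ω : Type*) [m0 : MeasurableSpace Ω] (T d : ℕ) where
  P : Measure Ω
  hProb : IsProbabilityMeasure P
  F : ℕ → MeasurableSpace Ω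
  F_le : ∀ t, F t ≤ m0
  F_mono : Monotone F
  S : ℕ → Ω → Fin d → ℝ
  S_adapted : ∀ t, Measurable[F t] (S t)
  r : ℕ → Ω → ℝ
  r_nonneg : ∀ t ω, 0 ≤ r t ω
  r_adapted : ∀ t, Measurable[F t] (r t)

variable {Ω : Type*} [m0 : MeasurableSpace Ω] {T d : ℕ}

/-- A trading strategy: `N i t ω j` is the number of shares of asset `j` bought at time `i`
and still held after trading at time `t`.  It is `F t`-adapted, nonnegative, nonincreasing
in `t` (for `i ≤ t < T`), forced to liquidate at `T`, and zero before the purchase date. -/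
def Market.IsStrategy (M : Market Ω T d) (N : ℕ → ℕ → Ω → Fin d → ℝ) : Prop :=
  (∀ i t, Measurable[M.F t] (N i t)) ∧
  (∀ i t ω j, 0 ≤ N i t ω j) ∧
  (∀ i t, i ≤ t → t < T → ∀ ω j, N i (t + 1) ω j ≤ N i t ω j) ∧
  (∀ i ω j, N i T ω j = 0) ∧
  (∀ i t, t < i → ∀ ω j, N i t ω j = 0)

/-- After-tax terminal wealth `V^α(x,N) = η_T`. -/
def Market.V (M : Market Ω T d) (α x : ℝ) (N : ℕ → ℕ → Ω → Fin d → ℝ) (ω : Ω) : ℝ :=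
  etaHist α x (fun t => M.S t ω) (fun t => M.r t ω) (fun i t => N i t ω) T T

/-- The frictionless (tax-free) wealth process `V^0_t(x,N) = η_t + ⟨∑_{i≤t} N_{i,t}, S_t⟩`,
where `η` is the bank account for tax rate `0`. -/
def Market.V0proc (M : Market Ω T d) (x : ℝ) (N : ℕ → ℕ → Ω → Fin d → ℝ) (t : ℕ) (ω : Ω) : ℝ :=
  etaHist 0 x (fun u => M.S u ω) (fun u => M.r u ω) (fun i u => N i u ω) t t
    + dotp (fun j => ∑ i ∈ Finset.range (t + 1), N i t ω j) (fun j => M.S t ω j)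

/-- The no-arbitrage condition for tax rate `α`. -/
def Market.NA (M : Market Ω T d) (α : ℝ) : Prop :=
  ∀ N, M.IsStrategy N → (∀ᵐ ω ∂M.P, 0 ≤ M.V α 0 N ω) → ∀ᵐ ω ∂M.P, M.V α 0 N ω = 0

/-- The set `{V^α(x,N) : N ∈ 𝒩} - L^0(F_T; ℝ₊)` of attainable after-tax terminal wealths. -/
def Market.Vset (M : Market Ω T d) (α x : ℝ) : Set (Ω → ℝ) :=
  {f | ∃ N, M.IsStrategy N ∧
    ∃ g : Ω → ℝ, Measurable[M.F T] g ∧ (∀ ω, 0 ≤ g ω) ∧ f = fun ω => M.V α x N ω - g ω}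

/-- The frictionless wealth recursion
`V_t = (1+r_t) V_{t-1} + ⟨∑_{i<t} N_{i,t-1}, S_t - (1+r_t) S_{t-1}⟩`. -/
def wealth0 {d : ℕ} (S : ℕ → Fin d → ℝ) (r : ℕ → ℝ) (N : ℕ → ℕ → Fin d → ℝ) (x : ℝ) :
    ℕ → ℝ :=
  Nat.rec (motive := fun _ => ℝ) x (fun t W =>
    (1 + r (t + 1)) * W
      + dotp (fun j => ∑ i ∈ Finset.range (t + 1), N i t j)
          (fun j => S (t + 1) j - (1 + r (t + 1)) * S t j))

/-- Frictionless terminal wealth `V^0(x,N)`. -/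
def Market.V0 (M : Market Ω T d) (x : ℝ) (N : ℕ → ℕ → Ω → Fin d → ℝ) (ω : Ω) : ℝ :=
  wealth0 (fun t => M.S t ω) (fun t => M.r t ω) (fun i t => N i t ω) x T

/-- No-arbitrage for the frictionless model. -/
def Market.NA0 (M : Market Ω T d) : Prop :=
  ∀ N, M.IsStrategy N → (∀ᵐ ω ∂M.P, 0 ≤ M.V0 0 N ω) → ∀ᵐ ω ∂M.P, M.V0 0 N ω = 0

/-- The cone `ℛ_t` of reversible one-period strategies. -/
def Market.RevCone (M : Market Ω T d) (t : ℕ) : Set (Ω → Fin d → ℝ) :=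
  {β | Measurable[M.F t] β ∧ (∀ ω j, 0 ≤ β ω j) ∧
    ∀ᵐ ω ∂M.P, dotp (β ω) (fun j => M.S (t + 1) ω j - (1 + M.r (t + 1) ω) * M.S t ω j) = 0}

/-- `q` is the purely nonreversible part `q_t(β)` of `β`: it is `F_t`-measurable, nonnegative,
`β - q` is reversible, and `q` has minimal Euclidean norm among all such decompositions. -/
def Market.IsQ (M : Market Ω T d) (t : ℕ) (β q : Ω → Fin d → ℝ) : Prop :=
  Measurable[M.F t] q ∧ (∀ ω j, 0 ≤ q ω j) ∧
  (fun ω j => β ω j - q ω j) ∈ M.RevCone t ∧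
  ∀ q' : Ω → Fin d → ℝ, Measurable[M.F t] q' → (∀ ω j, 0 ≤ q' ω j) →
    (fun ω j => β ω j - q' ω j) ∈ M.RevCone t →
    ∀ᵐ ω ∂M.P, eucNorm (q ω) ≤ eucNorm (q' ω)

/-- `β` is purely nonreversible, i.e. `q_t(β) = β`. -/
def Market.PurelyNonRev (M : Market Ω T d) (t : ℕ) (β : Ω → Fin d → ℝ) : Prop :=
  M.IsQ t β β

/-- A reaction function: `R ω a i t` may depend on `ω` only through `F_t` and on the action
history `a` only through the actions up to time `t`; it is nonnegative, nonincreasing in `t`,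
vanishes at and after the horizon `T` and before the purchase date. -/
structure ReactionFun (M : Market Ω T d) where
  R : Ω → (ℕ → ℕ → Fin d → ℝ) → ℕ → ℕ → Fin d → ℝ
  nonneg : ∀ ω a i t j, 0 ≤ R ω a i t j
  adapted_actions : ∀ ω a a' i t, (∀ i' t', t' ≤ t → a i' t' = a' i' t') →
    R ω a i t = R ω a' i t
  meas : ∀ i t, Measurable[(M.F t).prod inferInstance]
    (fun p : Ω × (ℕ → ℕ → Fin d → ℝ) => R p.1 p.2 i t)
  antitone : ∀ ω a i t, i ≤ t → t + 2 ≤ T → ∀ j, R ω a i (t + 1) j ≤ R ω a i t j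
  upper : ∀ ω a i t, T ≤ t → ∀ j, R ω a i t j = 0
  lower : ∀ ω a i t, t < i → ∀ j, R ω a i t j = 0

/-- The strategy `R(N)` produced by a reaction function from a strategy `N`. -/
def ReactionFun.apply {M : Market Ω T d} (Rf : ReactionFun M)
    (N : ℕ → ℕ → Ω → Fin d → ℝ) : ℕ → ℕ → Ω → Fin d → ℝ :=
  fun i t ω => Rf.R ω (fun i' t' => N i' t' ω) i t

/-- `max_{i=0,…,T-1, j=1,…,d} N_{i,i,j}`. -/
def stratMax {Ω : Type*} {d : ℕ} (T : ℕ) (N : ℕ → ℕ → Ω → Fin d → ℝ) (ω : Ω) : ℝ :=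
  ⨆ i ∈ Finset.range T, ⨆ j : Fin d, N i i ω j

/-- A family of random variables is bounded in `L⁰` (bounded in probability). -/
def BoundedInL0 {Ω : Type*} [MeasurableSpace Ω] (P : Measure Ω) (𝒮 : Set (Ω → ℝ)) : Prop :=
  ∀ ε : ℝ, 0 < ε → ∃ C : ℝ, ∀ f ∈ 𝒮, P {ω | C < |f ω|} ≤ ENNReal.ofReal ε

/-- The "no unbounded non-substitutable investment with bounded risk" condition. -/
def Market.NUIBR (M : Market Ω T d) (α : ℝ) : Prop :=
  ∀ x : ℝ, ∃ Rf : ReactionFun M,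
    (∀ N, M.IsStrategy N → M.IsStrategy (Rf.apply N)) ∧
    (∀ N, M.IsStrategy N → ∀ᵐ ω ∂M.P, M.V α x N ω ≤ M.V α x (Rf.apply N) ω) ∧
    ∀ K : ℝ, 0 ≤ K →
      BoundedInL0 M.P (convexHull ℝ
        {f : Ω → ℝ | ∃ N, M.IsStrategy N ∧ (∀ᵐ ω ∂M.P, -K ≤ M.V α x N ω) ∧
          f = stratMax T (Rf.apply N)})

/-- A set of random variables is closed with respect to convergence in probability
(as a subset of `L⁰`, i.e. up to almost-sure equality). -/
def ClosedInProbability {Ω : Type*} [MeasurableSpace Ω] (P : Measure Ω)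
    (𝒮 : Set (Ω → ℝ)) : Prop :=
  ∀ (f : ℕ → Ω → ℝ) (g : Ω → ℝ), (∀ n, f n ∈ 𝒮) →
    TendstoInMeasure P f Filter.atTop g → ∃ g' ∈ 𝒮, g' =ᵐ[P] g


/-- Bank account process for an artificial linear tax rule `τ`:
taxes `Π^{(τ)}_t = α · G_{τ_t}` are paid according to the rule `τ` (with `τ 0 = 0`,
so that `Π^{(τ)}_0 = 0`).  `etaTau α x S r N τ t s` gives `η^{(τ)}_s` for `s ≤ t`. -/
def etaTau {d : ℕ} (α x : ℝ) (S : ℕ → Fin d → ℝ) (r : ℕ → ℝ)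
    (N : ℕ → ℕ → Fin d → ℝ) (τ : ℕ → ℕ) : ℕ → ℕ → ℝ :=
  Nat.rec (motive := fun _ => ℕ → ℝ)
    (fun _ => x - dotp (fun j => N 0 0 j) (fun j => S 0 j))
    (fun t e => fun s =>
      if s ≤ t then e s
      else
        e t + r (t + 1) * e t
          + dotp
              (fun j => (∑ i ∈ Finset.range (t + 1), (N i t j - N i (t + 1) j))
                - N (t + 1) (t + 1) j)
              (fun j => S (t + 1) j)
          - (α * Gaux S r N e (τ (t + 1)) - α * Gaux S r N e (τ t)))

variable {Ω : Type*} [m0 : MeasurableSpace Ω] {T d : ℕ}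

/-- An artificial linear tax rule: an adapted `{0,…,T}`-valued process `τ` with `τ_0 = 0`,
`τ` nondecreasing in `t`, `τ_t ≤ t`, and `τ_{τ_t} = τ_t` whenever `τ_t ≥ 1`. -/
def Market.IsTaxRule (M : Market Ω T d) (τ : ℕ → Ω → ℕ) : Prop :=
  (∀ ω, τ 0 ω = 0) ∧
  (∀ t, Measurable[M.F t] (τ t)) ∧
  (∀ t ω, τ t ω ≤ t) ∧
  (∀ t ω, τ t ω ≤ T) ∧
  (∀ s t, s ≤ t → ∀ ω, τ s ω ≤ τ t ω) ∧
  (∀ t ω, 1 ≤ τ t ω → τ (τ t ω) ω = τ t ω)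

/-- Terminal bank account `η^{(τ)}_T(N)` under the artificial tax rule `τ`. -/
def Market.etaTauT (M : Market Ω T d) (α x : ℝ) (N : ℕ → ℕ → Ω → Fin d → ℝ)
    (τ : ℕ → Ω → ℕ) (ω : Ω) : ℝ :=
  etaTau α x (fun t => M.S t ω) (fun t => M.r t ω) (fun i t => N i t ω) (fun t => τ t ω) T T

/-- A strategy realizes losses: it does not keep shares that trade below their purchase
price. -/
def Market.RealizesLosses (M : Market Ω T d) (N : ℕ → ℕ → Ω → Fin d → ℝ) : Prop :=
  ∀ i t j, i < t → t ≤ T → ∀ᵐ ω ∂M.P, M.S t ω j < M.S i ω j → N i t ω j = 0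

/-- The loss bound `L_t(N) = ((−x) ∨ 0 + ∑_{s<t} ⟨q_s(∑_{i≤s} N_{i,s}), S_s⟩)(1+r̄)^T`,
expressed through a given family `q s` of purely nonreversible parts. -/
def Lfun {Ω : Type*} {d : ℕ} (x rbar : ℝ) (T : ℕ) (S : ℕ → Ω → Fin d → ℝ)
    (q : ℕ → Ω → Fin d → ℝ) (t : ℕ) (ω : Ω) : ℝ :=
  (max (-x) 0 + ∑ s ∈ Finset.range t, dotp (q s ω) (fun j => S s ω j)) * (1 + rbar) ^ T

/-- A stopping time of the filtration `F`. -/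
def IsStoppingTimeFun {Ω : Type*} (F : ℕ → MeasurableSpace Ω) (τ : Ω → ℕ) : Prop :=
  ∀ t : ℕ, MeasurableSet[F t] {ω | τ ω ≤ t}

/-- The family of random variables over which the essential infimum defining `ε_t` is
taken. -/
def Market.epsFamily (M : Market Ω T d) (t : ℕ) : Set (Ω → ENNReal) :=
  {g | ∃ (ε : Ω → ℝ) (A : Set Ω) (N : ℕ → ℕ → Ω → Fin d → ℝ),
    Measurable[M.F t] ε ∧ (∀ ω, ε ω ∈ Set.Icc (0:ℝ) 1) ∧
    MeasurableSet[M.F t] A ∧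
    M.IsStrategy N ∧ (∀ i, i < t → ∀ ω j, N i i ω j = 0) ∧
    M.PurelyNonRev t (fun ω => N t t ω) ∧
    (∀ᵐ ω ∂M.P, eucNorm (N t t ω) = Set.indicator A (fun _ => (1:ℝ)) ω) ∧
    (∀ᵐ ω ∂M.P,
      (M.P[Set.indicator {ω' | M.V0 0 N ω' ≤ - ε ω'} (fun _ => (1:ℝ)) | M.F t]) ω ≤ ε ω) ∧
    g = fun ω => if ω ∈ A then ENNReal.ofReal (ε ω) else (⊤ : ENNReal)}

/-- `e` is the essential infimum of the family `𝒮` of `[0,∞]`-valued random variables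
(with respect to `P`, measurable with respect to `m'`). -/
def IsEssInfOfSet {Ω : Type*} [MeasurableSpace Ω] (m' : MeasurableSpace Ω) (P : Measure Ω)
    (𝒮 : Set (Ω → ENNReal)) (e : Ω → ENNReal) : Prop :=
  Measurable[m'] e ∧ (∀ g ∈ 𝒮, ∀ᵐ ω ∂P, e ω ≤ g ω) ∧
  ∀ e' : Ω → ENNReal, Measurable[m'] e' → (∀ g ∈ 𝒮, ∀ᵐ ω ∂P, e' ω ≤ g ω) →
    ∀ᵐ ω ∂P, e' ω ≤ e ω

/-- The positive part of an extended-real number, as an element of `[0,∞]`. -/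
def erealPos (y : EReal) : ENNReal := if y = ⊤ then ⊤ else ENNReal.ofReal y.toReal

/-- A utility function: `U = -∞` on the negative half-line, real-valued, nondecreasing and
concave on the positive half-line (with real restriction `u`), and continuous from the
right at `0`. -/
structure UtilityFun where
  U : ℝ → EReal
  u : ℝ → ℝ
  neg_bot : ∀ y : ℝ, y < 0 → U y = ⊥
  pos_real : ∀ y : ℝ, 0 < y → U y = (u y : EReal)
  mono : MonotoneOn u (Set.Ioi (0:ℝ))
  concave : ConcaveOn ℝ (Set.Ioi (0:ℝ)) u
  zero_lim : Filter.Tendsto U (nhdsWithin 0 (Set.Ioi (0:ℝ))) (nhds (U 0))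

/-- Expected utility `E[U(X)] = E[U⁺(X)] - E[U⁻(X)]`, with the convention that it equals
`-∞` whenever `E[U⁻(X)] = ∞`. -/
def expUtility {Ω : Type*} [MeasurableSpace Ω] (P : Measure Ω) (Uf : UtilityFun)
    (X : Ω → ℝ) : EReal :=
  if (∫⁻ ω, erealPos (-(Uf.U (X ω))) ∂P) = ⊤ then ⊥
  else ((∫⁻ ω, erealPos (Uf.U (X ω)) ∂P : ENNReal) : EReal)
    - ((∫⁻ ω, erealPos (-(Uf.U (X ω))) ∂P : ENNReal) : EReal)

/-- The value function `u^α(x) = sup_{N ∈ 𝒜^α(x)} E[U(V^α(x,N))]` of the utility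
maximization problem with taxes. -/
def Market.valueFn (M : Market Ω T d) (Uf : UtilityFun) (α x : ℝ) : EReal :=
  ⨆ N ∈ {N : ℕ → ℕ → Ω → Fin d → ℝ |
      M.IsStrategy N ∧ ∀ᵐ ω ∂M.P, 0 ≤ M.V α x N ω},
    expUtility M.P Uf (fun ω => M.V α x N ω)

/-- The value function `u^0(x)` of the frictionless utility maximization problem. -/
def Market.valueFn0 (M : Market Ω T d) (Uf : UtilityFun) (x : ℝ) : EReal :=
  ⨆ N ∈ {N : ℕ → ℕ → Ω → Fin d → ℝ |
      M.IsStrategy N ∧ ∀ᵐ ω ∂M.P, 0 ≤ M.V0 x N ω},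
    expUtility M.P Uf (fun ω => M.V0 x N ω)

/-- The set `{V^α(x,N) : N ∈ 𝒜^α(x)} - L^0(F_T; ℝ₊)`. -/
def Market.VsetNonneg (M : Market Ω T d) (α x : ℝ) : Set (Ω → ℝ) :=
  {f | ∃ N, M.IsStrategy N ∧ (∀ᵐ ω ∂M.P, 0 ≤ M.V α x N ω) ∧
    ∃ g : Ω → ℝ, Measurable[M.F T] g ∧ (∀ ω, 0 ≤ g ω) ∧ f = fun ω => M.V α x N ω - g ω}

/-- The set `{V^0(x,N) : N ∈ 𝒩} - L^0(F_T; ℝ₊)` for the frictionless model. -/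
def Market.V0set (M : Market Ω T d) (x : ℝ) : Set (Ω → ℝ) :=
  {f | ∃ N, M.IsStrategy N ∧
    ∃ g : Ω → ℝ, Measurable[M.F T] g ∧ (∀ ω, 0 ≤ g ω) ∧ f = fun ω => M.V0 x N ω - g ω}

/-- A measurable (set-valued) random set: preimages of open sets are measurable. -/
def MeasRandomSet {Ω : Type*} (m : MeasurableSpace Ω) {d : ℕ}
    (K : Ω → Set (Fin d → ℝ)) : Prop :=
  ∀ O : Set (Fin d → ℝ), IsOpen O → MeasurableSet[m] {ω | (K ω ∩ O).Nonempty}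

/-- The random set `A_t = {β ∈ 𝒫_t : 1 + r_{t+1} + ⟨β, S_{t+1} - (1+r_{t+1})S_t⟩ ≥ 0 a.s.}`. -/
def Market.AtSet (M : Market Ω T d) (t : ℕ) : Set (Ω → Fin d → ℝ) :=
  {β | M.PurelyNonRev t β ∧
    ∀ᵐ ω ∂M.P, 0 ≤ 1 + M.r (t + 1) ω
      + dotp (β ω) (fun j => M.S (t + 1) ω j - (1 + M.r (t + 1) ω) * M.S t ω j)}

/-!
For finite `Ω` everything happens in finite-dimensional spaces. The wealth `V^α(x, N)` only
depends on the entries `N i t` with `i, t ≤ T`, the constraints on these entries (adaptedness,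
positivity, monotonicity, liquidation at `T`) are linear, and `V^α(x, N)` is a piecewise affine
function of them, because the recursion for `η` only adds, scales and takes the maxima in
`Π_t = α max_{u ≤ t} G_u`. So the set of triples `(N, g, V^α(x, N) - g)` is a finite union of
polyhedra, and `{V^α(x, N) : N ∈ 𝒩} - L⁰₊` is its projection to the last factor. Fourier–Motzkin
elimination shows that linear projections of finite unions of polyhedra are again finite unions
of polyhedra, and these are closed.
-/

open Set

theorem image_snd_eq_image_preimage {E F G : Type*} {φ : G → F × E} {π : G → E}
    (hφ : Function.Surjective φ) (hsnd : ∀ z, (φ z).2 = π z) (s : Set (F × E)) :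
    Prod.snd '' s = π '' (φ ⁻¹' s) := by
  conv_lhs => rw [← image_preimage_eq s hφ, image_image]
  simp only [hsnd]

section Polyhedra

variable {E F : Type*} [AddCommGroup E] [Module ℝ E] [AddCommGroup F] [Module ℝ F]

def IsPolyhedron (s : Set E) : Prop :=
  ∃ C : Set ((E →ₗ[ℝ] ℝ) × ℝ), C.Finite ∧ s = {x | ∀ c ∈ C, c.1 x ≤ c.2}

/-- A finite union of polyhedra (not necessarily convex). -/
def IsPolyhedralSet (s : Set E) : Prop :=
  ∃ S : Set (Set E), S.Finite ∧ (∀ P ∈ S, IsPolyhedron P) ∧ s = ⋃₀ S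

theorem isPolyhedron_setOf_forall_imp_le {ι : Type*} [Finite ι] (p : ι → Prop)
    (L : ι → E →ₗ[ℝ] ℝ) (c : ι → ℝ) : IsPolyhedron {x | ∀ i, p i → L i x ≤ c i} :=
  ⟨(fun i => (L i, c i)) '' {i | p i}, toFinite _, by ext; simp⟩

theorem isPolyhedron_univ : IsPolyhedron (univ : Set E) :=
  ⟨∅, finite_empty, by simp⟩

theorem isPolyhedron_setOf_le (L : E →ₗ[ℝ] ℝ) (c : ℝ) : IsPolyhedron {x | L x ≤ c} :=
  ⟨{(L, c)}, finite_singleton _, by simp⟩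

theorem IsPolyhedron.iInter {ι : Sort*} [Finite ι] {P : ι → Set E}
    (h : ∀ i, IsPolyhedron (P i)) : IsPolyhedron (⋂ i, P i) := by
  choose C hC hP using h
  refine ⟨⋃ i, C i, finite_iUnion hC, ?_⟩
  ext x
  simp only [hP, mem_iInter, mem_iUnion, forall_exists_index]
  exact forall_comm

theorem IsPolyhedron.inter {s t : Set E} (hs : IsPolyhedron s) (ht : IsPolyhedron t) :
    IsPolyhedron (s ∩ t) := by
  rw [inter_eq_iInter]
  exact IsPolyhedron.iInter fun b => b.casesOn ht hs

theorem isPolyhedron_setOf_eq (L : E →ₗ[ℝ] ℝ) (c : ℝ) : IsPolyhedron {x | L x = c} := by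
  have : {x | L x = c} = {x | L x ≤ c} ∩ {x | (-L) x ≤ -c} := by
    ext x; simp [le_antisymm_iff]
  rw [this]
  exact (isPolyhedron_setOf_le L c).inter (isPolyhedron_setOf_le (-L) (-c))

theorem IsPolyhedron.preimage {s : Set E} (hs : IsPolyhedron s) (φ : F →ₗ[ℝ] E) :
    IsPolyhedron (φ ⁻¹' s) := by
  obtain ⟨C, hC, rfl⟩ := hs
  refine ⟨(fun c => (c.1 ∘ₗ φ, c.2)) '' C, hC.image _, ?_⟩
  ext
  simp only [Set.mem_preimage, mem_ofPred_eq, Set.forall_mem_image]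
  rfl

theorem Submodule.isPolyhedron [FiniteDimensional ℝ E] (W : Submodule ℝ E) :
    IsPolyhedron (W : Set E) := by
  let b := Module.finBasis ℝ (E ⧸ W)
  have : (W : Set E) = ⋂ i, {x | (b.coord i ∘ₗ W.mkQ) x = 0} := by
    ext x
    simp only [SetLike.mem_coe, mem_iInter, mem_ofPred_eq, LinearMap.comp_apply,
      b.forall_coord_eq_zero_iff, Submodule.mkQ_apply, Submodule.Quotient.mk_eq_zero]
  rw [this]
  exact IsPolyhedron.iInter fun i => isPolyhedron_setOf_eq _ 0

theorem IsPolyhedron.isClosed [TopologicalSpace E] [IsTopologicalAddGroup E]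
    [ContinuousSMul ℝ E] [T2Space E] [FiniteDimensional ℝ E] {s : Set E}
    (hs : IsPolyhedron s) : IsClosed s := by
  obtain ⟨C, -, rfl⟩ := hs
  simp only [ofPred_forall]
  exact isClosed_biInter fun c _ =>
    isClosed_le c.1.continuous_of_finiteDimensional continuous_const

theorem IsPolyhedron.isPolyhedralSet {s : Set E} (hs : IsPolyhedron s) : IsPolyhedralSet s :=
  ⟨{s}, finite_singleton s, by simpa using hs, sUnion_singleton s |>.symm⟩

theorem isPolyhedralSet_iUnion {ι : Sort*} [Finite ι] {s : ι → Set E}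
    (h : ∀ i, IsPolyhedralSet (s i)) : IsPolyhedralSet (⋃ i, s i) := by
  choose S hS hP hs using h
  refine ⟨⋃ i, S i, finite_iUnion hS, fun P hP' => ?_, by simp [hs, sUnion_iUnion]⟩
  obtain ⟨i, hi⟩ := mem_iUnion.1 hP'
  exact hP i P hi

theorem IsPolyhedralSet.iInter {ι : Sort*} [Finite ι] {s : ι → Set E}
    (h : ∀ i, IsPolyhedralSet (s i)) : IsPolyhedralSet (⋂ i, s i) := by
  choose S hS hP hs using h
  have := fun i => (hS i).to_subtype
  have hdistr : ⋂ i, s i = ⋃ f : ∀ i, S i, ⋂ i, (f i : Set E) := by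
    simp only [hs, sUnion_eq_iUnion]
    exact iInf_iSup_eq
  rw [hdistr]
  exact isPolyhedralSet_iUnion fun f =>
    (IsPolyhedron.iInter fun i => hP i _ (f i).2).isPolyhedralSet

theorem IsPolyhedralSet.inter {s t : Set E} (hs : IsPolyhedralSet s)
    (ht : IsPolyhedralSet t) : IsPolyhedralSet (s ∩ t) := by
  rw [inter_eq_iInter]
  exact IsPolyhedralSet.iInter fun b => b.casesOn ht hs

theorem IsPolyhedralSet.preimage {s : Set E} (hs : IsPolyhedralSet s) (φ : F →ₗ[ℝ] E) :
    IsPolyhedralSet (φ ⁻¹' s) := by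
  obtain ⟨S, hS, hP, rfl⟩ := hs
  refine ⟨Set.preimage φ '' S, hS.image _, ?_, by simp [preimage_sUnion]⟩
  rintro _ ⟨P, hP', rfl⟩
  exact (hP P hP').preimage φ

theorem IsPolyhedralSet.isClosed [TopologicalSpace E] [IsTopologicalAddGroup E]
    [ContinuousSMul ℝ E] [T2Space E] [FiniteDimensional ℝ E] {s : Set E}
    (hs : IsPolyhedralSet s) : IsClosed s := by
  obtain ⟨S, hS, hP, rfl⟩ := hs
  rw [sUnion_eq_biUnion]
  exact hS.isClosed_biUnion fun P hP' => (hP P hP').isClosed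

theorem exists_between_of_finite {L U : Set ℝ} (hL : L.Finite) (hU : U.Finite)
    (h : ∀ l ∈ L, ∀ u ∈ U, l ≤ u) : ∃ t, (∀ l ∈ L, l ≤ t) ∧ ∀ u ∈ U, t ≤ u := by
  -- if `L` is empty then `sSup L = 0` is a harmless extra upper bound
  refine ⟨sInf (insert (sSup L) U), fun l hl => le_csInf (insert_nonempty _ _) ?_,
    fun u hu => csInf_le (hU.insert _).bddBelow (mem_insert_of_mem _ hu)⟩
  rintro _ (rfl | hu)
  · exact le_csSup hL.bddAbove hl
  · exact h l hl _ hu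

/-- Fourier–Motzkin elimination of one real variable. -/
theorem image_snd_setOf_forall_le {ι : Type*} [Finite ι] (a : ι → ℝ) (B : ι → E →ₗ[ℝ] ℝ)
    (b : ι → ℝ) :
    Prod.snd '' {x : ℝ × E | ∀ i, x.1 * a i + B i x.2 ≤ b i} =
      {y | ∀ i, a i = 0 → B i y ≤ b i} ∩
      {y | ∀ pq : ι × ι, 0 < a pq.1 ∧ a pq.2 < 0 →
        (a pq.1 • B pq.2 - a pq.2 • B pq.1) y ≤ a pq.1 * b pq.2 - a pq.2 * b pq.1} := by
  ext y
  simp only [mem_image, mem_inter_iff, mem_ofPred_eq, LinearMap.sub_apply,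
    LinearMap.smul_apply, smul_eq_mul, Prod.forall]
  constructor
  · rintro ⟨⟨t, y⟩, hty, rfl⟩
    refine ⟨fun i hi => by simpa [hi] using hty i, fun p q ⟨hp, hq⟩ => ?_⟩
    nlinarith [mul_le_mul_of_nonneg_left (hty q) hp.le, mul_le_mul_of_nonpos_left (hty p) hq.le]
  · rintro ⟨hzero, hpair⟩
    -- the constraint `i` with `a i ≠ 0` bounds `t` by `u i`, from below or from above
    let u : ι → ℝ := fun i => (b i - B i y) / a i
    obtain ⟨t, hlow, hup⟩ := exists_between_of_finite (toFinite (u '' {i | a i < 0}))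
      (toFinite (u '' {i | 0 < a i})) (by
        rintro _ ⟨q, hq, rfl⟩ _ ⟨p, hp, rfl⟩
        have := hpair p q ⟨hp, hq⟩
        rw [div_le_iff_of_neg hq, div_mul_eq_mul_div, div_le_iff₀ hp]
        nlinarith)
    refine ⟨(t, y), fun i => ?_, rfl⟩
    rcases lt_trichotomy (a i) 0 with hi | hi | hi
    · have := hlow _ ⟨i, hi, rfl⟩
      rw [div_le_iff_of_neg hi] at this
      dsimp; linarith
    · dsimp; rw [hi]; linarith [hzero i hi]
    · have := hup _ ⟨i, hi, rfl⟩
      rw [le_div_iff₀ hi] at this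
      dsimp; linarith

theorem IsPolyhedron.image_snd {s : Set (ℝ × E)} (hs : IsPolyhedron s) :
    IsPolyhedron (Prod.snd '' s) := by
  obtain ⟨C, hC, rfl⟩ := hs
  have := hC.to_subtype
  let a : C → ℝ := fun c => c.1.1 (1, 0)
  let B : C → E →ₗ[ℝ] ℝ := fun c => c.1.1 ∘ₗ LinearMap.inr ℝ ℝ E
  have hsplit : ∀ (c : C) (x : ℝ × E), c.1.1 x = x.1 * a c + B c x.2 := fun c x => by
    have hx : x = x.1 • ((1 : ℝ), (0 : E)) + LinearMap.inr ℝ ℝ E x.2 := by simp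
    conv_lhs => rw [hx, map_add, map_smul]
    rfl
  have hC' : {x : ℝ × E | ∀ c ∈ C, c.1 x ≤ c.2} =
      {x | ∀ c : C, x.1 * a c + B c x.2 ≤ c.1.2} := by
    ext x
    simp only [mem_ofPred_eq, ← hsplit, Subtype.forall]
  rw [hC', image_snd_setOf_forall_le]
  exact (isPolyhedron_setOf_forall_imp_le _ _ _).inter (isPolyhedron_setOf_forall_imp_le _ _ _)

theorem IsPolyhedralSet.image_snd_real {s : Set (ℝ × E)} (hs : IsPolyhedralSet s) :
    IsPolyhedralSet (Prod.snd '' s) := by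
  obtain ⟨S, hS, hP, rfl⟩ := hs
  have := hS.to_subtype
  rw [sUnion_eq_iUnion, image_iUnion]
  exact isPolyhedralSet_iUnion fun P => (hP P P.2).image_snd.isPolyhedralSet

theorem IsPolyhedralSet.image_snd_pi (n : ℕ) :
    ∀ {E : Type*} [AddCommGroup E] [Module ℝ E] {s : Set ((Fin n → ℝ) × E)},
      IsPolyhedralSet s → IsPolyhedralSet (Prod.snd '' s) := by
  induction n with
  | zero =>
    intro E _ _ s hs
    let φ := LinearMap.inr ℝ (Fin 0 → ℝ) E
    have hφ : Function.Surjective φ := fun z => ⟨z.2, Prod.ext (Subsingleton.elim _ _) rfl⟩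
    have hsnd : ∀ y, (φ y).2 = id y := fun _ => rfl
    rw [image_snd_eq_image_preimage hφ hsnd, image_id]
    exact hs.preimage φ
  | succ n ih =>
    intro E _ _ s hs
    -- `(v, (a, y)) ↦ (Fin.cons a v, y)`
    let φ : (Fin n → ℝ) × (ℝ × E) →ₗ[ℝ] (Fin (n + 1) → ℝ) × E :=
      ((Fin.consLinearEquiv ℝ fun _ => ℝ).toLinearMap ∘ₗ
        ((LinearMap.fst ℝ ℝ E ∘ₗ LinearMap.snd ℝ _ _).prod (LinearMap.fst ℝ _ _))).prod
        (LinearMap.snd ℝ ℝ E ∘ₗ LinearMap.snd ℝ _ _)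
    have hφ : Function.Surjective φ := fun z =>
      ⟨(Fin.tail z.1, (z.1 0, z.2)), Prod.ext (Fin.cons_self_tail z.1) rfl⟩
    have hsnd : ∀ z, (φ z).2 = z.2.2 := fun _ => rfl
    rw [image_snd_eq_image_preimage hφ hsnd, ← image_image]
    exact (ih (hs.preimage φ)).image_snd_real

theorem IsPolyhedralSet.image_snd [FiniteDimensional ℝ F] {s : Set (F × E)}
    (hs : IsPolyhedralSet s) : IsPolyhedralSet (Prod.snd '' s) := by
  let e := (Module.finBasis ℝ F).equivFun
  let φ : (Fin (Module.finrank ℝ F) → ℝ) × E →ₗ[ℝ] F × E :=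
    e.symm.toLinearMap.prodMap LinearMap.id
  have hφ : Function.Surjective φ := fun z => ⟨(e z.1, z.2), by simp [φ]⟩
  have hsnd : ∀ z, (φ z).2 = z.2 := fun _ => rfl
  rw [image_snd_eq_image_preimage hφ hsnd]
  exact image_snd_pi _ (hs.preimage φ)

end Polyhedra

section PiecewiseAffine

variable {E : Type*} [AddCommGroup E] [Module ℝ E]

def IsPiecewiseAffine (f : E → ℝ) : Prop :=
  ∃ (ι : Type) (_ : Finite ι) (P : ι → Set E) (L : ι → E →ₗ[ℝ] ℝ) (c : ι → ℝ),
    (∀ i, IsPolyhedron (P i)) ∧ (∀ x, ∃ i, x ∈ P i) ∧ ∀ i, ∀ x ∈ P i, f x = L i x + c i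

namespace IsPiecewiseAffine

theorem affine (L : E →ₗ[ℝ] ℝ) (c : ℝ) : IsPiecewiseAffine fun x => L x + c :=
  ⟨Unit, inferInstance, fun _ => univ, fun _ => L, fun _ => c,
    fun _ => isPolyhedron_univ, fun _ => ⟨(), trivial⟩, fun _ _ _ => rfl⟩

theorem const (c : ℝ) : IsPiecewiseAffine fun _ : E => c := by
  simpa using affine (0 : E →ₗ[ℝ] ℝ) c

theorem of_isLinearMap {f : E → ℝ} (hf : IsLinearMap ℝ f) : IsPiecewiseAffine f := by
  simpa using affine (IsLinearMap.mk' f hf) 0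

theorem add {f g : E → ℝ} (hf : IsPiecewiseAffine f) (hg : IsPiecewiseAffine g) :
    IsPiecewiseAffine fun x => f x + g x := by
  obtain ⟨ι, _, P, L, c, hP, hcov, hf⟩ := hf
  obtain ⟨κ, _, Q, L', c', hQ, hcov', hg⟩ := hg
  refine ⟨ι × κ, inferInstance, fun p => P p.1 ∩ Q p.2, fun p => L p.1 + L' p.2,
    fun p => c p.1 + c' p.2, fun p => (hP p.1).inter (hQ p.2), fun x => ?_,
    fun p x hx => ?_⟩
  · obtain ⟨i, hi⟩ := hcov x
    obtain ⟨j, hj⟩ := hcov' x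
    exact ⟨(i, j), hi, hj⟩
  · simp only [LinearMap.add_apply, hf p.1 x hx.1, hg p.2 x hx.2]
    ring

theorem const_mul {f : E → ℝ} (hf : IsPiecewiseAffine f) (r : ℝ) :
    IsPiecewiseAffine fun x => r * f x := by
  obtain ⟨ι, hι, P, L, c, hP, hcov, hf⟩ := hf
  refine ⟨ι, hι, P, fun i => r • L i, fun i => r * c i, hP, hcov, fun i x hx => ?_⟩
  simp only [LinearMap.smul_apply, smul_eq_mul, hf i x hx]
  ring

theorem mul_const {f : E → ℝ} (hf : IsPiecewiseAffine f) (r : ℝ) :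
    IsPiecewiseAffine fun x => f x * r := by
  simpa only [mul_comm] using hf.const_mul r

theorem sub {f g : E → ℝ} (hf : IsPiecewiseAffine f) (hg : IsPiecewiseAffine g) :
    IsPiecewiseAffine fun x => f x - g x := by
  simpa [sub_eq_add_neg] using hf.add (hg.const_mul (-1))

theorem max_zero {f : E → ℝ} (hf : IsPiecewiseAffine f) :
    IsPiecewiseAffine fun x => max (f x) 0 := by
  obtain ⟨ι, _, P, L, c, hP, hcov, hf⟩ := hf
  refine ⟨ι × Bool, inferInstance,
    fun p => P p.1 ∩ {x | (cond p.2 (-L p.1) (L p.1)) x ≤ cond p.2 (c p.1) (-c p.1)},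
    fun p => cond p.2 (L p.1) 0, fun p => cond p.2 (c p.1) 0,
    fun p => (hP p.1).inter (isPolyhedron_setOf_le _ _), fun x => ?_, ?_⟩
  · obtain ⟨i, hi⟩ := hcov x
    rcases le_total 0 (f x) with h | h
    · refine ⟨(i, true), hi, ?_⟩
      simp only [cond_true, LinearMap.neg_apply, mem_ofPred_eq]
      linarith [hf i x hi]
    · refine ⟨(i, false), hi, ?_⟩
      simp only [cond_false, mem_ofPred_eq]
      linarith [hf i x hi]
  · rintro ⟨i, _ | _⟩ x ⟨hi, hx⟩ <;> simp only [cond_true, cond_false, LinearMap.neg_apply,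
      LinearMap.zero_apply, mem_ofPred_eq, add_zero] at hx ⊢ <;> rw [hf i x hi]
    · exact max_eq_right (by linarith)
    · exact max_eq_left (by linarith)

theorem max {f g : E → ℝ} (hf : IsPiecewiseAffine f) (hg : IsPiecewiseAffine g) :
    IsPiecewiseAffine fun x => max (f x) (g x) := by
  convert (hf.sub hg).max_zero.add hg using 2 with x
  rw [← sub_self (g x), max_sub_sub_right, sub_add_cancel]

theorem sum {κ : Type*} (s : Finset κ) {f : κ → E → ℝ}
    (h : ∀ k ∈ s, IsPiecewiseAffine (f k)) : IsPiecewiseAffine fun x => ∑ k ∈ s, f k x := by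
  rw [← Finset.sum_fn]
  exact Finset.sum_induction f IsPiecewiseAffine (fun _ _ => add) (const 0) h

theorem sup' {κ : Type*} (s : Finset κ) (hs : s.Nonempty) {f : κ → E → ℝ}
    (h : ∀ k ∈ s, IsPiecewiseAffine (f k)) :
    IsPiecewiseAffine fun x => s.sup' hs (fun k => f k x) := by
  simp only [← Finset.sup'_apply]
  exact Finset.sup'_induction hs f (fun _ h₁ _ h₂ => h₁.max h₂) h

theorem isPolyhedralSet_setOf_nonpos {f : E → ℝ} (hf : IsPiecewiseAffine f) :
    IsPolyhedralSet {x | f x ≤ 0} := by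
  obtain ⟨ι, _, P, L, c, hP, hcov, hf⟩ := hf
  have : {x | f x ≤ 0} = ⋃ i, P i ∩ {x | L i x ≤ -c i} := by
    ext x
    simp only [mem_ofPred_eq, mem_iUnion, mem_inter_iff]
    constructor
    · intro hx
      obtain ⟨i, hi⟩ := hcov x
      exact ⟨i, hi, by linarith [hf i x hi]⟩
    · rintro ⟨i, hi, hx⟩
      linarith [hf i x hi]
  rw [this]
  exact isPolyhedralSet_iUnion fun i =>
    ((hP i).inter (isPolyhedron_setOf_le _ _)).isPolyhedralSet

theorem isPolyhedralSet_setOf_le {f g : E → ℝ} (hf : IsPiecewiseAffine f)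
    (hg : IsPiecewiseAffine g) : IsPolyhedralSet {x | f x ≤ g x} := by
  simpa [sub_nonpos] using (hf.sub hg).isPolyhedralSet_setOf_nonpos

theorem isPolyhedralSet_setOf_eq {f g : E → ℝ} (hf : IsPiecewiseAffine f)
    (hg : IsPiecewiseAffine g) : IsPolyhedralSet {x | f x = g x} := by
  simpa [← le_antisymm_iff, ← ofPred_and] using
    (hf.isPolyhedralSet_setOf_le hg).inter (hg.isPolyhedralSet_setOf_le hf)

end IsPiecewiseAffine

end PiecewiseAffine

section Recursion

variable (α x : ℝ) (S : ℕ → Fin d → ℝ) (r : ℕ → ℝ) (N : ℕ → ℕ → Fin d → ℝ)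

theorem etaHist_zero (s : ℕ) :
    etaHist α x S r N 0 s = x - dotp (fun j => N 0 0 j) (fun j => S 0 j) :=
  rfl

theorem etaHist_succ_of_le {t s : ℕ} (h : s ≤ t) :
    etaHist α x S r N (t + 1) s = etaHist α x S r N t s :=
  if_pos h

theorem etaHist_succ_of_not_le {t s : ℕ} (h : ¬s ≤ t) :
    etaHist α x S r N (t + 1) s =
      etaHist α x S r N t t + r (t + 1) * etaHist α x S r N t t
        + dotp (fun j => (∑ i ∈ range (t + 1), (N i t j - N i (t + 1) j)) - N (t + 1) (t + 1) j)
            (fun j => S (t + 1) j)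
        - (Piaux α S r N (etaHist α x S r N t) (t + 1) - Piaux α S r N (etaHist α x S r N t) t) :=
  if_neg h

end Recursion

section Wealth

variable {E : Type*} [AddCommGroup E] [Module ℝ E]

theorem isPiecewiseAffine_dotp {A : E → Fin d → ℝ}
    (hA : ∀ j, IsPiecewiseAffine fun v => A v j) (b : Fin d → ℝ) :
    IsPiecewiseAffine fun v => dotp (A v) b :=
  IsPiecewiseAffine.sum univ fun j _ => (hA j).mul_const (b j)

variable (S : ℕ → Fin d → ℝ) (r : ℕ → ℝ) {N : E → ℕ → ℕ → Fin d → ℝ}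
  (hN : ∀ i t j, IsPiecewiseAffine fun v => N v i t j)
include hN

theorem isPiecewiseAffine_Gaux {e : E → ℕ → ℝ} (he : ∀ s, IsPiecewiseAffine fun v => e v s)
    (t : ℕ) : IsPiecewiseAffine fun v => Gaux S r (N v) (e v) t :=
  IsPiecewiseAffine.sum _ fun u _ => ((he (u - 1)).mul_const (r u)).add <|
    IsPiecewiseAffine.sum _ fun _ _ =>
      isPiecewiseAffine_dotp (fun j => (hN _ _ j).sub (hN _ _ j)) _

theorem isPiecewiseAffine_Piaux (α : ℝ) {e : E → ℕ → ℝ}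
    (he : ∀ s, IsPiecewiseAffine fun v => e v s) (t : ℕ) :
    IsPiecewiseAffine fun v => Piaux α S r (N v) (e v) t :=
  (IsPiecewiseAffine.sup' _ _ fun u _ => isPiecewiseAffine_Gaux S r hN he u).const_mul α

theorem isPiecewiseAffine_etaHist (α x : ℝ) (t s : ℕ) :
    IsPiecewiseAffine fun v => etaHist α x S r (N v) t s := by
  induction t generalizing s with
  | zero => exact (IsPiecewiseAffine.const x).sub (isPiecewiseAffine_dotp (hN 0 0) _)
  | succ t ih =>
    by_cases hst : s ≤ t
    · simpa only [etaHist_succ_of_le _ _ _ _ _ hst] using ih s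
    · simp only [etaHist_succ_of_not_le _ _ _ _ _ hst]
      exact ((((ih t).add ((ih t).const_mul _)).add (isPiecewiseAffine_dotp (fun j =>
        (IsPiecewiseAffine.sum _ fun i _ => (hN i t j).sub (hN i (t + 1) j)).sub
          (hN _ _ j)) _)).sub ((isPiecewiseAffine_Piaux S r hN α ih _).sub
          (isPiecewiseAffine_Piaux S r hN α ih _)))

end Wealth

section Locality

variable (S : ℕ → Fin d → ℝ) (r : ℕ → ℝ) {N N' : ℕ → ℕ → Fin d → ℝ}
  (h : ∀ i ≤ T, ∀ t ≤ T, N i t = N' i t)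
include h

theorem Gaux_congr (e : ℕ → ℝ) {t : ℕ} (ht : t ≤ T) : Gaux S r N e t = Gaux S r N' e t := by
  refine sum_congr rfl fun u hu => ?_
  have hu := (mem_Icc.1 hu).2
  refine congrArg _ (sum_congr rfl fun i hi => ?_)
  have hi := mem_range.1 hi
  rw [h i (by omega) (u - 1) (by omega), h i (by omega) u (by omega)]

theorem Piaux_congr (α : ℝ) (e : ℕ → ℝ) {t : ℕ} (ht : t ≤ T) :
    Piaux α S r N e t = Piaux α S r N' e t :=
  congrArg _ (sup'_congr _ rfl fun u hu => Gaux_congr S r h e (by have := mem_range.1 hu; omega))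

theorem etaHist_congr (α x : ℝ) {t : ℕ} (ht : t ≤ T) (s : ℕ) :
    etaHist α x S r N t s = etaHist α x S r N' t s := by
  induction t generalizing s with
  | zero =>
    rw [etaHist_zero, etaHist_zero, h 0 ht 0 ht]
  | succ t ih =>
    have ih := fun s => ih (by omega) s
    by_cases hst : s ≤ t
    · simp only [etaHist_succ_of_le _ _ _ _ _ hst, ih]
    · have hdot : ∀ j, ∑ i ∈ range (t + 1), (N i t j - N i (t + 1) j) =
          ∑ i ∈ range (t + 1), (N' i t j - N' i (t + 1) j) := fun j =>
        sum_congr rfl fun i hi => by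
          have := mem_range.1 hi
          rw [h i (by omega) t (by omega), h i (by omega) (t + 1) ht]
      rw [etaHist_succ_of_not_le _ _ _ _ _ hst, etaHist_succ_of_not_le _ _ _ _ _ hst, funext ih,
        Piaux_congr S r h α _ ht, Piaux_congr S r h α _ (by omega : t ≤ T),
        h (t + 1) ht (t + 1) ht]
      simp only [hdot]

end Locality

section Measurability

variable {Ω : Type*} (X : Type*) [AddCommGroup X] [Module ℝ X] [MeasurableSpace X]
  [MeasurableAdd₂ X] [MeasurableConstSMul ℝ X]

def measurableSubmodule (m : MeasurableSpace Ω) : Submodule ℝ (Ω → X) where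
  carrier := {g | Measurable[m] g}
  add_mem' hf hg := hf.add hg
  zero_mem' := measurable_const
  smul_mem' c _ hg := hg.const_smul c

theorem isPolyhedron_setOf_measurable [Finite Ω] [FiniteDimensional ℝ X]
    (m : MeasurableSpace Ω) : IsPolyhedron {g : Ω → X | Measurable[m] g} :=
  (measurableSubmodule X m).isPolyhedron

end Measurability

section Truncation

def extendByZero {X : Type*} [Zero X] (T : ℕ) (n : Fin (T + 1) → Fin (T + 1) → X) :
    ℕ → ℕ → X :=
  fun i t => if h : i ≤ T ∧ t ≤ T then n ⟨i, by omega⟩ ⟨t, by omega⟩ else 0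

theorem extendByZero_of_le {X : Type*} [Zero X] (n : Fin (T + 1) → Fin (T + 1) → X) {i t : ℕ}
    (hi : i ≤ T) (ht : t ≤ T) : extendByZero T n i t = n ⟨i, by omega⟩ ⟨t, by omega⟩ :=
  dif_pos ⟨hi, ht⟩

theorem extendByZero_of_not_le {X : Type*} [Zero X] (n : Fin (T + 1) → Fin (T + 1) → X)
    {i t : ℕ} (h : ¬(i ≤ T ∧ t ≤ T)) : extendByZero T n i t = 0 :=
  dif_neg h

/-- `Market.IsStrategy` for the entries `n i t`, `i, t ≤ T`, which are the only ones the wealth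
depends on (`Market.V_extendByZero`). -/
def Market.IsTruncatedStrategy (M : Market Ω T d)
    (n : Fin (T + 1) → Fin (T + 1) → Ω → Fin d → ℝ) : Prop :=
  (∀ i t : Fin (T + 1), Measurable[M.F t] (n i t)) ∧
  (∀ i t ω j, 0 ≤ n i t ω j) ∧
  (∀ i (t : Fin T), i ≤ t.castSucc → ∀ ω j, n i t.succ ω j ≤ n i t.castSucc ω j) ∧
  (∀ i ω j, n i (Fin.last T) ω j = 0) ∧
  (∀ i t, t < i → ∀ ω j, n i t ω j = 0)

theorem Market.IsTruncatedStrategy.isStrategy_extendByZero {M : Market Ω T d}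
    {n : Fin (T + 1) → Fin (T + 1) → Ω → Fin d → ℝ} (hn : M.IsTruncatedStrategy n) :
    M.IsStrategy (extendByZero T n) := by
  obtain ⟨hmeas, hnonneg, hanti, hlast, hbefore⟩ := hn
  refine ⟨fun i t => ?_, fun i t ω j => ?_, fun i t hit htT ω j => ?_, fun i ω j => ?_,
    fun i t hti ω j => ?_⟩
  · by_cases h : i ≤ T ∧ t ≤ T
    · rw [extendByZero_of_le n h.1 h.2]; exact hmeas _ _
    · rw [extendByZero_of_not_le n h]; exact measurable_const
  · by_cases h : i ≤ T ∧ t ≤ T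
    · rw [extendByZero_of_le n h.1 h.2]; exact hnonneg _ _ _ _
    · rw [extendByZero_of_not_le n h]; rfl
  · rw [extendByZero_of_le n (by omega) htT, extendByZero_of_le n (by omega) htT.le]
    exact hanti ⟨i, by omega⟩ ⟨t, htT⟩ hit ω j
  · by_cases h : i ≤ T
    · rw [extendByZero_of_le n h le_rfl]; exact hlast _ _ _
    · rw [extendByZero_of_not_le n (by omega)]; rfl
  · by_cases h : i ≤ T
    · rw [extendByZero_of_le n h (by omega)]; exact hbefore _ _ hti _ _
    · rw [extendByZero_of_not_le n (by omega)]; rfl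

theorem Market.IsStrategy.isTruncatedStrategy {M : Market Ω T d}
    {N : ℕ → ℕ → Ω → Fin d → ℝ} (hN : M.IsStrategy N) :
    M.IsTruncatedStrategy fun i t => N i t := by
  obtain ⟨hmeas, hnonneg, hanti, hlast, hbefore⟩ := hN
  exact ⟨fun i t => hmeas i t, fun i t => hnonneg i t,
    fun i t hit => hanti i t hit t.isLt, fun i => hlast i, fun i t hti => hbefore i t hti⟩

theorem Market.V_extendByZero (M : Market Ω T d) (α x : ℝ) (N : ℕ → ℕ → Ω → Fin d → ℝ) :
    M.V α x (extendByZero T fun i t => N i t) = M.V α x N := by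
  funext ω
  refine etaHist_congr _ _ (fun i hi t ht => ?_) α x le_rfl T
  funext j
  simp only [extendByZero_of_le _ hi ht]

end Truncation

section Lift

theorem Market.isPolyhedralSet_setOf_isTruncatedStrategy [Finite Ω] (M : Market Ω T d) :
    IsPolyhedralSet {n | M.IsTruncatedStrategy n} := by
  have hc : ∀ i t ω j,
      IsPiecewiseAffine fun n : Fin (T + 1) → Fin (T + 1) → Ω → Fin d → ℝ => n i t ω j :=
    fun _ _ _ _ => .of_isLinearMap ⟨fun _ _ => rfl, fun _ _ => rfl⟩
  simp only [Market.IsTruncatedStrategy, ofPred_and, ofPred_forall]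
  refine .inter (.iInter fun i => .iInter fun t => ?_) (.inter ?_ (.inter ?_ (.inter ?_ ?_)))
  · exact ((isPolyhedron_setOf_measurable _ _).preimage (LinearMap.proj t ∘ₗ
      LinearMap.proj (R := ℝ) (φ := fun _ : Fin (T + 1) => Fin (T + 1) → Ω → Fin d → ℝ) i)
      ).isPolyhedralSet
  · exact .iInter fun i => .iInter fun t => .iInter fun ω => .iInter fun j =>
      (IsPiecewiseAffine.const 0).isPolyhedralSet_setOf_le (hc i t ω j)
  · exact .iInter fun i => .iInter fun t => .iInter fun _ => .iInter fun ω => .iInter fun j =>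
      (hc _ _ ω j).isPolyhedralSet_setOf_le (hc _ _ ω j)
  · exact .iInter fun i => .iInter fun ω => .iInter fun j =>
      (hc _ _ ω j).isPolyhedralSet_setOf_eq (.const 0)
  · exact .iInter fun i => .iInter fun t => .iInter fun _ => .iInter fun ω => .iInter fun j =>
      (hc _ _ ω j).isPolyhedralSet_setOf_eq (.const 0)

def Market.VsetLift (M : Market Ω T d) (α x : ℝ) :
    Set (((Fin (T + 1) → Fin (T + 1) → Ω → Fin d → ℝ) × (Ω → ℝ)) × (Ω → ℝ)) :=
  {p | M.IsTruncatedStrategy p.1.1 ∧ Measurable[M.F T] p.1.2 ∧ (∀ ω, 0 ≤ p.1.2 ω) ∧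
    p.2 = fun ω => M.V α x (extendByZero T p.1.1) ω - p.1.2 ω}

theorem Market.Vset_eq_image_snd_VsetLift (M : Market Ω T d) (α x : ℝ) :
    M.Vset α x = Prod.snd '' M.VsetLift α x := by
  ext f
  constructor
  · rintro ⟨N, hN, g, hg, hg0, rfl⟩
    exact ⟨((fun i t => N i t, g), _), ⟨hN.isTruncatedStrategy, hg, hg0, by
      rw [M.V_extendByZero]⟩, rfl⟩
  · rintro ⟨⟨⟨n, g⟩, f⟩, ⟨hn, hg, hg0, hf⟩, rfl⟩
    exact ⟨_, hn.isStrategy_extendByZero, g, hg, hg0, hf⟩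

theorem Market.isPolyhedralSet_VsetLift [Finite Ω] (M : Market Ω T d) (α x : ℝ) :
    IsPolyhedralSet (M.VsetLift α x) := by
  have hn : ∀ i t ω j, IsPiecewiseAffine fun p :
      ((Fin (T + 1) → Fin (T + 1) → Ω → Fin d → ℝ) × (Ω → ℝ)) × (Ω → ℝ) =>
        extendByZero T p.1.1 i t ω j := by
    intro i t ω j
    by_cases h : i ≤ T ∧ t ≤ T
    · simp only [extendByZero_of_le _ h.1 h.2]
      exact .of_isLinearMap ⟨fun _ _ => rfl, fun _ _ => rfl⟩
    · simpa only [extendByZero_of_not_le _ h, Pi.zero_apply] using IsPiecewiseAffine.const 0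
  simp only [Market.VsetLift, ofPred_and, funext_iff, ofPred_forall]
  refine .inter ?_ (.inter ?_ (.inter ?_ ?_))
  · exact M.isPolyhedralSet_setOf_isTruncatedStrategy.preimage
      (LinearMap.fst ℝ _ _ ∘ₗ LinearMap.fst ℝ (_ × (Ω → ℝ)) (Ω → ℝ))
  · exact ((isPolyhedron_setOf_measurable (Ω := Ω) ℝ (M.F T)).preimage
      (LinearMap.snd ℝ (Fin (T + 1) → Fin (T + 1) → Ω → Fin d → ℝ) _ ∘ₗ
        LinearMap.fst ℝ _ (Ω → ℝ))).isPolyhedralSet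
  · exact .iInter fun ω => (IsPiecewiseAffine.const 0).isPolyhedralSet_setOf_le
      (.of_isLinearMap ⟨fun _ _ => rfl, fun _ _ => rfl⟩)
  · exact .iInter fun ω =>
      (IsPiecewiseAffine.of_isLinearMap ⟨fun _ _ => rfl, fun _ _ => rfl⟩).isPolyhedralSet_setOf_eq
        ((isPiecewiseAffine_etaHist _ _ (fun i t j => hn i t ω j) α x T T).sub
          (.of_isLinearMap ⟨fun _ _ => rfl, fun _ _ => rfl⟩))

end Lift

theorem Vset_isClosed_of_finite_general [Fintype Ω]
    (M : Market Ω T d) (α : ℝ) (x : ℝ) :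
    IsClosed (M.Vset α x) := by
  rw [M.Vset_eq_image_snd_VsetLift α x]
  exact (M.isPolyhedralSet_VsetLift α x).image_snd.isClosed

/-- On a finite probability space, the set of attainable after-tax terminal
wealths `{V^α(x,N) : N ∈ 𝒩} - L^0(F_T; ℝ₊)` is closed with respect to the supremum norm
(the product topology on `Ω → ℝ` for finite `Ω`), even if no-arbitrage fails. -/
theorem Vset_isClosed_of_finite [Fintype Ω]
    (M : Market Ω T d) (α : ℝ) (hα0 : 0 ≤ α) (hα1 : α < 1) (x : ℝ) :
    IsClosed (M.Vset α x) :=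
  Vset_isClosed_of_finite_general M α x

end
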